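/- arXiv:2506.13533 — 8 statements merged into one kernel-verified Lean document; each statement's English description precedes it below -/
import Mathlib

section
/- Let (V, d) be a metric space and let P, Q be disjoint finite subsets with X = P ∪ Q, |P| ≥ (1-α)|X| and |Q| ≤ α|X| for some α ∈ (0, 1/8). Define cost(S, p) = Σ_{x∈S} d(x, p), and let C_P, C_X be points minimizing cost(P, ·) and cost(X, ·) respectively over V. Then cost(X, C_P) ≤ (1 + 2α/(1-α)) · cost(X, C_X). -/
theorem dominant_set_cost_l1 {V : Type*} [MetricSpace V] [DecidableEq V]
    (P Q : Finset V) (hdisj : Disjoint P Q) (α : ℝ) (hα : 0 < α) (hα8 : α < 1 / 8)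
    (hP : (1 - α) * ((P ∪ Q).card : ℝ) ≤ (P.card : ℝ))
    (hQ : ((Q.card : ℝ)) ≤ α * ((P ∪ Q).card : ℝ))
    (CP CX : V)
    (hCP : ∀ p : V, ∑ x ∈ P, dist x CP ≤ ∑ x ∈ P, dist x p)
    (hCX : ∀ p : V, ∑ x ∈ P ∪ Q, dist x CX ≤ ∑ x ∈ P ∪ Q, dist x p) :
    ∑ x ∈ P ∪ Q, dist x CP ≤ (1 + 2 * α / (1 - α)) * ∑ x ∈ P ∪ Q, dist x CX := by
  set A := ∑ x ∈ P, dist x CP with hA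
  set B := ∑ x ∈ P, dist x CX with hB
  set C := ∑ x ∈ Q, dist x CP with hC
  set D := ∑ x ∈ Q, dist x CX with hD
  have hsum1 : ∑ x ∈ P ∪ Q, dist x CP = A + C := Finset.sum_union hdisj
  have hsum2 : ∑ x ∈ P ∪ Q, dist x CX = B + D := Finset.sum_union hdisj
  rw [hsum1, hsum2]
  have h1 : A ≤ B := hCP CX
  have h2 : (P.card : ℝ) * dist CP CX ≤ A + B := by
    have : ∑ _x ∈ P, dist CP CX ≤ ∑ x ∈ P, (dist x CP + dist x CX) := by
      apply Finset.sum_le_sum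
      intro x _
      calc dist CP CX ≤ dist CP x + dist x CX := dist_triangle _ _ _
        _ = dist x CP + dist x CX := by rw [dist_comm]
    simpa [Finset.sum_add_distrib, mul_comm] using this
  have h3 : C ≤ D + (Q.card : ℝ) * dist CP CX := by
    have : ∑ x ∈ Q, dist x CP ≤ ∑ x ∈ Q, (dist x CX + dist CX CP) := by
      apply Finset.sum_le_sum
      intro x _
      exact dist_triangle _ _ _
    simpa [Finset.sum_add_distrib, mul_comm, dist_comm CP CX] using this
  have hBnn : 0 ≤ B := Finset.sum_nonneg fun x _ => dist_nonneg
  have hDnn : 0 ≤ D := Finset.sum_nonneg fun x _ => dist_nonneg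
  have hdnn : 0 ≤ dist CP CX := dist_nonneg
  have hqnn : (0:ℝ) ≤ (Q.card : ℝ) := Nat.cast_nonneg _
  have h1α : (0:ℝ) < 1 - α := by linarith
  set n : ℝ := ((P ∪ Q).card : ℝ) with hn
  have hnnn : 0 ≤ n := Nat.cast_nonneg _
  -- key: q * d ≤ 2α/(1-α) * (B + D)
  have key : (Q.card : ℝ) * dist CP CX ≤ 2 * α / (1 - α) * (B + D) := by
    rcases eq_or_lt_of_le hnnn with h0 | hpos
    · -- n = 0 : P ∪ Q empty, so Q empty
      have : (P ∪ Q).card = 0 := by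
        have := h0.symm
        rw [hn] at this
        exact_mod_cast this
      have hQ0 : Q.card = 0 := by
        have := Finset.card_le_card (Finset.subset_union_right (s₁ := P) (s₂ := Q))
        omega
      rw [hQ0]
      simp
      positivity
    · -- (1-α) n (q d) ≤ p (q d) ≤ q (A+B) ≤ 2 q B ≤ 2 α n (B+D)
      have s1 : (1 - α) * n * ((Q.card : ℝ) * dist CP CX) ≤
          (P.card : ℝ) * ((Q.card : ℝ) * dist CP CX) := by
        apply mul_le_mul_of_nonneg_right hP (by positivity)
      have s2 : (P.card : ℝ) * ((Q.card : ℝ) * dist CP CX) ≤ (Q.card : ℝ) * (A + B) := by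
        have := mul_le_mul_of_nonneg_left h2 hqnn
        nlinarith
      have s3 : (Q.card : ℝ) * (A + B) ≤ 2 * α * n * (B + D) := by
        have hq2 : (Q.card : ℝ) ≤ α * n := hQ
        nlinarith
      have chain : (1 - α) * n * ((Q.card : ℝ) * dist CP CX) ≤ 2 * α * n * (B + D) := by
        linarith
      rw [div_mul_eq_mul_div, le_div_iff₀ h1α]
      have hn0 : n ≠ 0 := ne_of_gt hpos
      nlinarith
  calc A + C ≤ B + (D + (Q.card : ℝ) * dist CP CX) := by linarith
    _ ≤ B + D + 2 * α / (1 - α) * (B + D) := by linarith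
    _ = (1 + 2 * α / (1 - α)) * (B + D) := by ring
end

section
/- Let (V, d) be a metric space and let P, Q be disjoint finite nonempty subsets with X = P ∪ Q, |P| ≥ (1-α)|X| and |Q| ≤ α|X| for some α ∈ (0, 1/8). Define cost(S, p) = Σ_{x∈S} d(x, p)², and let C_P, C_X be points minimizing cost(P, ·) and cost(X, ·) respectively over V. Then cost(X, C_P) ≤ (1 + 6√(α/(1-α))) · cost(X, C_X). -/
set_option maxHeartbeats 1000000

theorem dominant_set_cost_l2 {V : Type*} [MetricSpace V] [DecidableEq V]
    (P Q : Finset V) (hdisj : Disjoint P Q) (hPne : P.Nonempty) (hQne : Q.Nonempty)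
    (α : ℝ) (hα : 0 < α) (hα8 : α < 1 / 8)
    (hP : (1 - α) * ((P ∪ Q).card : ℝ) ≤ (P.card : ℝ))
    (hQ : ((Q.card : ℝ)) ≤ α * ((P ∪ Q).card : ℝ))
    (CP CX : V)
    (hCP : ∀ p : V, ∑ x ∈ P, dist x CP ^ 2 ≤ ∑ x ∈ P, dist x p ^ 2)
    (hCX : ∀ p : V, ∑ x ∈ P ∪ Q, dist x CX ^ 2 ≤ ∑ x ∈ P ∪ Q, dist x p ^ 2) :
    ∑ x ∈ P ∪ Q, dist x CP ^ 2 ≤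
      (1 + 6 * Real.sqrt (α / (1 - α))) * ∑ x ∈ P ∪ Q, dist x CX ^ 2 := by
  classical
  set D := dist CP CX with hDdef
  have hD0 : 0 ≤ D := dist_nonneg
  set T := ∑ x ∈ P ∪ Q, dist x CX ^ 2 with hTdef
  have hT0 : 0 ≤ T := Finset.sum_nonneg fun x _ => sq_nonneg _
  have hsplit : T = ∑ x ∈ P, dist x CX ^ 2 + ∑ x ∈ Q, dist x CX ^ 2 :=
    Finset.sum_union hdisj
  set S := ∑ x ∈ Q, dist x CX with hSdef
  have hS0 : 0 ≤ S := Finset.sum_nonneg fun x _ => dist_nonneg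
  have hPnn : (0:ℝ) ≤ ∑ x ∈ P, dist x CX ^ 2 := Finset.sum_nonneg fun x _ => sq_nonneg _
  have hQnn : (0:ℝ) ≤ ∑ x ∈ Q, dist x CX ^ 2 := Finset.sum_nonneg fun x _ => sq_nonneg _
  have hPT : ∑ x ∈ P, dist x CX ^ 2 ≤ T := by rw [hsplit]; linarith
  have hQT : ∑ x ∈ Q, dist x CX ^ 2 ≤ T := by rw [hsplit]; linarith
  have h1α : 0 < 1 - α := by linarith
  set r := α / (1 - α) with hrdef
  have hr0 : 0 ≤ r := div_nonneg hα.le h1α.le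
  have hp1 : (1:ℝ) ≤ (P.card : ℝ) := by exact_mod_cast hPne.card_pos
  have hq0 : (0:ℝ) ≤ (Q.card : ℝ) := Nat.cast_nonneg _
  have hqrp : (Q.card : ℝ) ≤ r * (P.card : ℝ) := by
    rw [hrdef, div_mul_eq_mul_div, le_div_iff₀ h1α]
    nlinarith [hP, hQ]
  have hr14 : r ≤ 1 / 4 := by
    rw [hrdef, div_le_iff₀ h1α]; nlinarith
  set w := Real.sqrt r with hwdef
  have hw0 : 0 ≤ w := Real.sqrt_nonneg _
  have hw2 : w ^ 2 = r := Real.sq_sqrt hr0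
  have hw12 : w ≤ 1 / 2 := by nlinarith [hw2, hr14, hw0]
  -- minimality of CP on P
  have hPmin : ∑ x ∈ P, dist x CP ^ 2 ≤ ∑ x ∈ P, dist x CX ^ 2 := hCP CX
  -- |P| * D^2 ≤ 4 T
  have hpD : (P.card : ℝ) * D ^ 2 ≤ 4 * T := by
    have h1 : (P.card : ℝ) * D ^ 2 = ∑ _x ∈ P, D ^ 2 := by
      rw [Finset.sum_const, nsmul_eq_mul]
    have h2 : ∑ _x ∈ P, D ^ 2 ≤ ∑ x ∈ P, (2 * dist x CP ^ 2 + 2 * dist x CX ^ 2) := by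
      apply Finset.sum_le_sum
      intro x _
      have ht : D ≤ dist x CP + dist x CX := by
        rw [hDdef]
        calc dist CP CX ≤ dist CP x + dist x CX := dist_triangle _ _ _
          _ = dist x CP + dist x CX := by rw [dist_comm CP x]
      nlinarith [sq_nonneg (dist x CP - dist x CX), dist_nonneg (x := x) (y := CP),
        dist_nonneg (x := x) (y := CX), hD0]
    have h3 : ∑ x ∈ P, (2 * dist x CP ^ 2 + 2 * dist x CX ^ 2)
        = 2 * ∑ x ∈ P, dist x CP ^ 2 + 2 * ∑ x ∈ P, dist x CX ^ 2 := by
      rw [Finset.sum_add_distrib, Finset.mul_sum, Finset.mul_sum]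
    rw [h1]
    calc ∑ _x ∈ P, D ^ 2 ≤ 2 * ∑ x ∈ P, dist x CP ^ 2 + 2 * ∑ x ∈ P, dist x CX ^ 2 := by
          rw [← h3]; exact h2
      _ ≤ 4 * ∑ x ∈ P, dist x CX ^ 2 := by linarith
      _ ≤ 4 * T := by linarith
  -- Cauchy-Schwarz on Q
  have hCS : S ^ 2 ≤ (Q.card : ℝ) * ∑ x ∈ Q, dist x CX ^ 2 := by
    have := sq_sum_le_card_mul_sum_sq (s := Q) (f := fun x => dist x CX)
    simpa using this
  have hS2T : S ^ 2 ≤ (Q.card : ℝ) * T :=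
    hCS.trans (by nlinarith)
  -- pointwise bound on Q
  have hQsum : ∑ x ∈ Q, dist x CP ^ 2
      ≤ ∑ x ∈ Q, dist x CX ^ 2 + 2 * D * S + (Q.card : ℝ) * D ^ 2 := by
    have h2 : ∑ x ∈ Q, dist x CP ^ 2
        ≤ ∑ x ∈ Q, (dist x CX ^ 2 + 2 * D * dist x CX + D ^ 2) := by
      apply Finset.sum_le_sum
      intro x _
      have ht : dist x CP ≤ dist x CX + D := by
        rw [hDdef, dist_comm CP CX]
        exact dist_triangle x CX CP
      nlinarith [dist_nonneg (x := x) (y := CP), dist_nonneg (x := x) (y := CX), hD0]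
    have h3 : ∑ x ∈ Q, (dist x CX ^ 2 + 2 * D * dist x CX + D ^ 2)
        = ∑ x ∈ Q, dist x CX ^ 2 + 2 * D * S + (Q.card : ℝ) * D ^ 2 := by
      rw [Finset.sum_add_distrib, Finset.sum_add_distrib, Finset.sum_const, nsmul_eq_mul,
        hSdef, Finset.mul_sum]
    rw [h3] at h2
    exact h2
  -- main split
  have hLHS : ∑ x ∈ P ∪ Q, dist x CP ^ 2 ≤ T + 2 * D * S + (Q.card : ℝ) * D ^ 2 := by
    rw [Finset.sum_union hdisj, hsplit]
    linarith
  -- bound 2 D S ≤ 4 w T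
  have hDS : 2 * D * S ≤ 4 * w * T := by
    have hsq : (2 * D * S) ^ 2 ≤ (4 * w * T) ^ 2 := by
      have h1 : D ^ 2 * S ^ 2 ≤ D ^ 2 * ((Q.card : ℝ) * T) :=
        mul_le_mul_of_nonneg_left hS2T (sq_nonneg D)
      have h2 : (Q.card : ℝ) * T ≤ r * (P.card : ℝ) * T :=
        mul_le_mul_of_nonneg_right hqrp hT0
      have h3 : (P.card : ℝ) * D ^ 2 * T ≤ 4 * T * T :=
        mul_le_mul_of_nonneg_right hpD hT0
      have h4 : D ^ 2 * ((Q.card : ℝ) * T) ≤ D ^ 2 * (r * (P.card : ℝ) * T) :=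
        mul_le_mul_of_nonneg_left h2 (sq_nonneg D)
      have h5 : r * ((P.card : ℝ) * D ^ 2 * T) ≤ r * (4 * T * T) :=
        mul_le_mul_of_nonneg_left h3 hr0
      have h6 : w ^ 2 * T ^ 2 = r * T ^ 2 := by rw [hw2]
      nlinarith [h1, h4, h5, h6]
    have h4 : 0 ≤ 2 * D * S := by positivity
    have h5 : 0 ≤ 4 * w * T := by positivity
    nlinarith [hsq, h4, h5]
  -- bound q D² ≤ 4 w² T
  have hqD : (Q.card : ℝ) * D ^ 2 ≤ 4 * w ^ 2 * T := by
    have h1 : (Q.card : ℝ) * D ^ 2 ≤ r * (P.card : ℝ) * D ^ 2 :=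
      mul_le_mul_of_nonneg_right hqrp (sq_nonneg D)
    calc (Q.card : ℝ) * D ^ 2 ≤ r * ((P.card : ℝ) * D ^ 2) := by linarith
      _ ≤ r * (4 * T) := mul_le_mul_of_nonneg_left hpD hr0
      _ = 4 * w ^ 2 * T := by rw [hw2]; ring
  -- combine
  have hfinal : 2 * D * S + (Q.card : ℝ) * D ^ 2 ≤ 6 * w * T := by
    have : 4 * w ^ 2 * T ≤ 2 * w * T := by
      nlinarith [mul_nonneg hw0 hT0]
    linarith
  calc ∑ x ∈ P ∪ Q, dist x CP ^ 2 ≤ T + 2 * D * S + (Q.card : ℝ) * D ^ 2 := hLHS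
    _ ≤ T + 6 * w * T := by linarith
    _ = (1 + 6 * w) * T := by ring
end

section
/- Let (V, d) be a metric space, P a finite nonempty subset, and c* a point of V. Let C_P minimize cost(P, p) = Σ_{x∈P} d(x, p)² over p ∈ V. Then |P| · d(C_P, c*) ≤ 2·√(|P| · cost(P, c*)). -/
/-!
By the triangle inequality through each point of `P`, `|P| · d(C_P, c*)` is at most
`Σ d(x, C_P) + Σ d(x, c*)`. Cauchy–Schwarz bounds each sum by `√(|P| · cost)`, and optimality of
`C_P` lets us replace `cost(P, C_P)` by `cost(P, c*)`.
-/

open Finset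

theorem Finset.sum_le_sqrt_card_mul_sum_sq {ι : Type*} (s : Finset ι) (f : ι → ℝ) :
    ∑ i ∈ s, f i ≤ √(#s * ∑ i ∈ s, f i ^ 2) :=
  Real.le_sqrt_of_sq_le sq_sum_le_card_mul_sum_sq

theorem Finset.card_mul_dist_le_sum_dist_add_sum_dist {V : Type*} [PseudoMetricSpace V]
    (s : Finset V) (a b : V) :
    #s * dist a b ≤ ∑ x ∈ s, dist x a + ∑ x ∈ s, dist x b := by
  rw [← sum_add_distrib, ← nsmul_eq_mul, ← sum_const]
  exact sum_le_sum fun x _ => dist_triangle_left a b x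

theorem center_dist_bound_general {V : Type*} [MetricSpace V]
    (P : Finset V) (cstar CP : V)
    (hCP : ∀ p : V, ∑ x ∈ P, dist x CP ^ 2 ≤ ∑ x ∈ P, dist x p ^ 2) :
    (P.card : ℝ) * dist CP cstar ≤
      2 * Real.sqrt ((P.card : ℝ) * ∑ x ∈ P, dist x cstar ^ 2) := by
  calc (P.card : ℝ) * dist CP cstar
      ≤ ∑ x ∈ P, dist x CP + ∑ x ∈ P, dist x cstar :=
        P.card_mul_dist_le_sum_dist_add_sum_dist CP cstar
    _ ≤ √(#P * ∑ x ∈ P, dist x CP ^ 2) + √(#P * ∑ x ∈ P, dist x cstar ^ 2) :=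
        add_le_add (P.sum_le_sqrt_card_mul_sum_sq _) (P.sum_le_sqrt_card_mul_sum_sq _)
    _ ≤ √(#P * ∑ x ∈ P, dist x cstar ^ 2) + √(#P * ∑ x ∈ P, dist x cstar ^ 2) := by
        gcongr √(_ * ?_) + _
        exact hCP cstar
    _ = 2 * √(#P * ∑ x ∈ P, dist x cstar ^ 2) := (two_mul _).symm

theorem center_dist_bound {V : Type*} [MetricSpace V]
    (P : Finset V) (hPne : P.Nonempty) (cstar CP : V)
    (hCP : ∀ p : V, ∑ x ∈ P, dist x CP ^ 2 ≤ ∑ x ∈ P, dist x p ^ 2) :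
    (P.card : ℝ) * dist CP cstar ≤
      2 * Real.sqrt ((P.card : ℝ) * ∑ x ∈ P, dist x cstar ^ 2) :=
  center_dist_bound_general P cstar CP hCP
end

section
/- Let (V, d) be a metric space, and let P, P* be finite subsets such that |P ∩ P*| ≥ (1-α)·max(|P|, |P*|) for some α ∈ (0, 1/2). Define cost(S, p) = Σ_{x∈S} d(x, p), and let C_P, C_{P*} be minimizers of cost(P, ·) and cost(P*, ·) over V. Then d(C_P, C_{P*}) ≤ 2·cost(P ∩ P*, C_{P*}) / ((1-2α)·max(|P|, |P*|)), assuming P ∩ P* is nonempty. -/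
theorem center_distance_overlap_bound {V : Type*} [MetricSpace V] [DecidableEq V]
    (P Pstar : Finset V) (α : ℝ) (hα : 0 < α) (hα2 : α < 1 / 2)
    (hoverlap : (1 - α) * (max P.card Pstar.card : ℝ) ≤ ((P ∩ Pstar).card : ℝ))
    (hne : (P ∩ Pstar).Nonempty)
    (CP CPstar : V)
    (hCP : ∀ p : V, ∑ x ∈ P, dist x CP ≤ ∑ x ∈ P, dist x p)
    (hCPstar : ∀ p : V, ∑ x ∈ Pstar, dist x CPstar ≤ ∑ x ∈ Pstar, dist x p) :
    dist CP CPstar ≤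
      2 * (∑ x ∈ P ∩ Pstar, dist x CPstar) / ((1 - 2 * α) * (max P.card Pstar.card : ℝ)) := by
  set I := P ∩ Pstar with hIdef
  set D := dist CP CPstar with hDdef
  set M : ℝ := (max P.card Pstar.card : ℝ) with hMdef
  have hsub : I ⊆ P := Finset.inter_subset_left
  have hPne : P.Nonempty := hne.mono hsub
  have hPcard : (1 : ℝ) ≤ (P.card : ℝ) := by
    exact_mod_cast Finset.card_pos.mpr hPne
  have hPM : (P.card : ℝ) ≤ M := by
    rw [hMdef]; exact_mod_cast Nat.le_max_left _ _
  have hMpos : 0 < (1 - 2 * α) * M := by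
    apply mul_pos (by linarith) (by linarith)
  have hDnn : 0 ≤ D := dist_nonneg
  -- h1 : |I| * D ≤ A + B
  have h1 : (I.card : ℝ) * D ≤ ∑ x ∈ I, dist x CP + ∑ x ∈ I, dist x CPstar := by
    have := Finset.card_nsmul_le_sum I (fun x => dist x CP + dist x CPstar) D
      (fun x _ => by
        show D ≤ dist x CP + dist x CPstar
        rw [dist_comm x CP]
        exact dist_triangle CP x CPstar)
    rw [nsmul_eq_mul, Finset.sum_add_distrib] at this
    exact this
  -- h2 : sum over P splits
  have h2 : ∑ x ∈ P \ I, dist x CP + ∑ x ∈ I, dist x CP = ∑ x ∈ P, dist x CP :=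
    Finset.sum_sdiff hsub
  have h2' : ∑ x ∈ P \ I, dist x CPstar + ∑ x ∈ I, dist x CPstar
      = ∑ x ∈ P, dist x CPstar := Finset.sum_sdiff hsub
  have h3 : ∑ x ∈ P, dist x CP ≤ ∑ x ∈ P, dist x CPstar := hCP CPstar
  -- h4 : C2 ≤ C1 + |P\I| * D
  have h4 : ∑ x ∈ P \ I, dist x CPstar
      ≤ ∑ x ∈ P \ I, dist x CP + ((P \ I).card : ℝ) * D := by
    have := Finset.sum_le_sum (f := fun x => dist x CPstar)
      (g := fun x => dist x CP + D)
      (fun x (_ : x ∈ P \ I) => dist_triangle x CP CPstar)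
    rw [Finset.sum_add_distrib, Finset.sum_const, nsmul_eq_mul] at this
    exact this
  have hcard : ((P \ I).card : ℝ) = (P.card : ℝ) - (I.card : ℝ) := by
    rw [Finset.card_sdiff_of_subset hsub]
    have := Finset.card_le_card hsub
    push_cast [this]
    ring
  have hkey : ((1 - 2 * α) * M) ≤ 2 * (I.card : ℝ) - (P.card : ℝ) := by
    nlinarith [hoverlap, hPM]
  have hmain : (2 * (I.card : ℝ) - (P.card : ℝ)) * D ≤ 2 * ∑ x ∈ I, dist x CPstar := by
    nlinarith [h1, h2, h2', h3, h4, hcard]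
  rw [le_div_iff₀ hMpos]
  calc D * ((1 - 2 * α) * M) ≤ D * (2 * (I.card : ℝ) - (P.card : ℝ)) :=
        mul_le_mul_of_nonneg_left hkey hDnn
    _ = (2 * (I.card : ℝ) - (P.card : ℝ)) * D := mul_comm _ _
    _ ≤ 2 * ∑ x ∈ I, dist x CPstar := hmain
end

section
/- Let (V, d) be a metric space and let P, P* be finite subsets with |P ∩ P*| ≥ (1-α)·max(|P|, |P*|) for some α ∈ (0, 1/2), with P ∩ P* nonempty. Define cost(S, p) = Σ_{x∈S} d(x, p) and let C_P, C_{P*} minimize cost(P, ·) and cost(P*, ·) over V. Then cost(P*, C_P) ≤ (1 + 4α/(1-2α)) · cost(P*, C_{P*}). -/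
theorem predictor_center_cost_l1 {V : Type*} [MetricSpace V] [DecidableEq V]
    (P Pstar : Finset V) (α : ℝ) (hα : 0 < α) (hα2 : α < 1 / 2)
    (hoverlap : (1 - α) * (max P.card Pstar.card : ℝ) ≤ ((P ∩ Pstar).card : ℝ))
    (hne : (P ∩ Pstar).Nonempty)
    (CP CPstar : V)
    (hCP : ∀ p : V, ∑ x ∈ P, dist x CP ≤ ∑ x ∈ P, dist x p)
    (hCPstar : ∀ p : V, ∑ x ∈ Pstar, dist x CPstar ≤ ∑ x ∈ Pstar, dist x p) :
    ∑ x ∈ Pstar, dist x CP ≤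
      (1 + 4 * α / (1 - 2 * α)) * ∑ x ∈ Pstar, dist x CPstar := by
  classical
  set I : Finset V := P ∩ Pstar with hIdef
  have hIP : I ⊆ P := Finset.inter_subset_left
  have hIPs : I ⊆ Pstar := Finset.inter_subset_right
  set D : ℝ := dist CP CPstar with hDdef
  have hD0 : (0:ℝ) ≤ D := dist_nonneg
  set m : ℝ := (max P.card Pstar.card : ℝ) with hmdef
  have h12 : (0:ℝ) < 1 - 2 * α := by linarith
  -- split sums
  have hsplitP : ∀ p : V, ∑ x ∈ P, dist x p = ∑ x ∈ I, dist x p + ∑ x ∈ P \ I, dist x p := by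
    intro p; rw [← Finset.sum_sdiff hIP]; ring
  have hsplitPs : ∀ p : V,
      ∑ x ∈ Pstar, dist x p = ∑ x ∈ I, dist x p + ∑ x ∈ Pstar \ I, dist x p := by
    intro p; rw [← Finset.sum_sdiff hIPs]; ring
  -- triangle inequalities
  have htri1 : ∑ x ∈ P \ I, dist x CPstar ≤ ∑ x ∈ P \ I, dist x CP + ((P \ I).card : ℝ) * D := by
    calc ∑ x ∈ P \ I, dist x CPstar ≤ ∑ x ∈ P \ I, (dist x CP + D) :=
          Finset.sum_le_sum fun x _ => dist_triangle x CP CPstar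
      _ = ∑ x ∈ P \ I, dist x CP + ((P \ I).card : ℝ) * D := by
          rw [Finset.sum_add_distrib, Finset.sum_const, nsmul_eq_mul]
  have htri2 : ∑ x ∈ Pstar \ I, dist x CP
      ≤ ∑ x ∈ Pstar \ I, dist x CPstar + ((Pstar \ I).card : ℝ) * D := by
    calc ∑ x ∈ Pstar \ I, dist x CP ≤ ∑ x ∈ Pstar \ I, (dist x CPstar + D) := by
          refine Finset.sum_le_sum fun x _ => ?_
          have := dist_triangle x CPstar CP
          rw [dist_comm CPstar CP] at this
          linarith
      _ = ∑ x ∈ Pstar \ I, dist x CPstar + ((Pstar \ I).card : ℝ) * D := by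
          rw [Finset.sum_add_distrib, Finset.sum_const, nsmul_eq_mul]
  -- optimality of CP restricted to I
  have hstar : ∑ x ∈ I, dist x CP ≤ ∑ x ∈ I, dist x CPstar + ((P \ I).card : ℝ) * D := by
    have h := hCP CPstar
    rw [hsplitP CP, hsplitP CPstar] at h
    linarith
  -- bound on D
  have hDb : (I.card : ℝ) * D ≤ 2 * ∑ x ∈ I, dist x CPstar + ((P \ I).card : ℝ) * D := by
    have h1 : (I.card : ℝ) * D ≤ ∑ x ∈ I, (dist x CP + dist x CPstar) := by
      rw [← nsmul_eq_mul, ← Finset.sum_const]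
      refine Finset.sum_le_sum fun x _ => ?_
      have := dist_triangle CP x CPstar
      rw [dist_comm CP x] at this
      linarith
    rw [Finset.sum_add_distrib] at h1
    linarith
  -- cardinality bounds
  have hcP : ((P \ I).card : ℝ) = (P.card : ℝ) - (I.card : ℝ) := by
    rw [Finset.card_sdiff_of_subset hIP]
    have := Finset.card_le_card hIP
    push_cast [Nat.cast_sub this]
    ring
  have hcPs : ((Pstar \ I).card : ℝ) = (Pstar.card : ℝ) - (I.card : ℝ) := by
    rw [Finset.card_sdiff_of_subset hIPs]
    have := Finset.card_le_card hIPs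
    push_cast [Nat.cast_sub this]
    ring
  have hPm : (P.card : ℝ) ≤ m := by
    simp only [hmdef]; exact_mod_cast le_max_left _ _
  have hPsm : (Pstar.card : ℝ) ≤ m := by
    simp only [hmdef]; exact_mod_cast le_max_right _ _
  have hI : (1 - α) * m ≤ (I.card : ℝ) := hoverlap
  have hc1 : ((P \ I).card : ℝ) ≤ α * m := by rw [hcP]; linarith
  have hc2 : ((Pstar \ I).card : ℝ) ≤ α * m := by rw [hcPs]; linarith
  -- key inequality: (1-2α) m D ≤ 2 A where A = cost(I, CPstar)
  set A : ℝ := ∑ x ∈ I, dist x CPstar with hAdef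
  have hkey : (1 - 2 * α) * m * D ≤ 2 * A := by
    have h1 : (1 - 2 * α) * m ≤ (I.card : ℝ) - ((P \ I).card : ℝ) := by linarith
    have h2 : (1 - 2 * α) * m * D ≤ ((I.card : ℝ) - ((P \ I).card : ℝ)) * D :=
      mul_le_mul_of_nonneg_right h1 hD0
    nlinarith
  have hAS : A ≤ ∑ x ∈ Pstar, dist x CPstar := by
    rw [hsplitPs CPstar]
    have : (0:ℝ) ≤ ∑ x ∈ Pstar \ I, dist x CPstar :=
      Finset.sum_nonneg fun x _ => dist_nonneg
    linarith
  -- combine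
  have hmain : (((P \ I).card : ℝ) + ((Pstar \ I).card : ℝ)) * D
      ≤ 4 * α / (1 - 2 * α) * ∑ x ∈ Pstar, dist x CPstar := by
    have hle : (((P \ I).card : ℝ) + ((Pstar \ I).card : ℝ)) * D ≤ 2 * α * m * D := by
      have : ((P \ I).card : ℝ) + ((Pstar \ I).card : ℝ) ≤ 2 * α * m := by linarith
      exact mul_le_mul_of_nonneg_right this hD0
    have hcoef : (0:ℝ) ≤ 2 * α / (1 - 2 * α) := by positivity
    have h3 : 2 * α * m * D = 2 * α / (1 - 2 * α) * ((1 - 2 * α) * m * D) := by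
      field_simp
    have h4 : 2 * α / (1 - 2 * α) * ((1 - 2 * α) * m * D)
        ≤ 2 * α / (1 - 2 * α) * (2 * A) := mul_le_mul_of_nonneg_left hkey hcoef
    have h5 : 2 * α / (1 - 2 * α) * (2 * A) ≤ 2 * α / (1 - 2 * α) * (2 * ∑ x ∈ Pstar, dist x CPstar) := by
      apply mul_le_mul_of_nonneg_left _ hcoef
      linarith
    calc (((P \ I).card : ℝ) + ((Pstar \ I).card : ℝ)) * D ≤ 2 * α * m * D := hle
      _ = 2 * α / (1 - 2 * α) * ((1 - 2 * α) * m * D) := h3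
      _ ≤ 2 * α / (1 - 2 * α) * (2 * A) := h4
      _ ≤ 2 * α / (1 - 2 * α) * (2 * ∑ x ∈ Pstar, dist x CPstar) := h5
      _ = 4 * α / (1 - 2 * α) * ∑ x ∈ Pstar, dist x CPstar := by ring
  have hSsplit := hsplitPs CPstar
  rw [hsplitPs CP]
  linarith [hmain, hstar, htri2, hSsplit]
end

section
/- Let (V, d) be a metric space and let P, P* be finite subsets with |P ∩ P*| ≥ (1-α)·max(|P|, |P*|) for α ∈ (0, 1/8). With squared-distance cost cost(S, p) = Σ_{x∈S} d(x, p)², let B ⊆ P be a subset of size ⌈(1-α)|P|⌉ minimizing cost(B, C_B) over all subsets of P of that size, where C_B minimizes cost(B, ·) over V. Then cost(P*, C_B) ≤ (1 + 45√α) · cost(P*, C_{P*}). -/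
private lemma aux_sq (a b D : ℝ) (hD0 : 0 ≤ D) (h : D ≤ a + b) :
    D ^ 2 ≤ 2 * a ^ 2 + 2 * b ^ 2 := by
  nlinarith [sq_nonneg (a - b), pow_le_pow_left₀ hD0 h 2]

private lemma aux_pt (s a b D : ℝ) (hs0 : 0 < s) (ha : 0 ≤ a) (h : a ≤ b + D) :
    s * a ^ 2 ≤ (s + s ^ 2) * b ^ 2 + (1 + s) * D ^ 2 := by
  have h1 : s * a ^ 2 ≤ s * (b + D) ^ 2 :=
    mul_le_mul_of_nonneg_left (pow_le_pow_left₀ ha h 2) hs0.le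
  nlinarith [sq_nonneg (s * b - D), h1]

private lemma aux_T (α b i t p n : ℝ) (h1 : b + i ≤ t + p) (h2 : (1 - α) * p ≤ b)
    (h3 : (1 - α) * p ≤ i) (h4 : (1 - α) * n ≤ i) (hα0 : 0 < α) (hα8 : α < 1 / 8) :
    (1 - 2 * α) * n ≤ t := by
  have hA : i - α * p ≤ t := by nlinarith
  have hB : α * ((1 - α) * p) ≤ α * i := mul_le_mul_of_nonneg_left h3 hα0.le
  have hC : (1 - 2 * α) * ((1 - α) * n) ≤ (1 - 2 * α) * i :=
    mul_le_mul_of_nonneg_left h4 (by linarith)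
  have hD : (1 - α) * (i - α * p) ≤ (1 - α) * t :=
    mul_le_mul_of_nonneg_left hA (by linarith)
  nlinarith [hB, hC, hD]

private lemma aux_k (α k p i n : ℝ) (h1 : k ≤ p - i) (h3 : (1 - α) * p ≤ i) (h5 : i ≤ n)
    (hα0 : 0 < α) (hα1 : α < 1) : (1 - α) * k ≤ α * n := by
  have hA : (1 - α) * k ≤ (1 - α) * (p - i) :=
    mul_le_mul_of_nonneg_left h1 (by linarith)
  have hB : (1 - α) * ((1 - α) * p) ≤ (1 - α) * i :=
    mul_le_mul_of_nonneg_left h3 (by linarith)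
  have hC : α * i ≤ α * n := mul_le_mul_of_nonneg_left h5 hα0.le
  nlinarith [hA, hB, hC]

private lemma aux_nD (α t n OPT D2 : ℝ) (h1 : t * D2 ≤ 4 * OPT) (h2 : (1 - 2 * α) * n ≤ t)
    (hD2 : 0 ≤ D2) (hn : 0 ≤ n) (hα0 : 0 < α) (hα8 : α < 1 / 8) :
    n * D2 ≤ (16 / 3) * OPT := by
  have hA : ((1 - 2 * α) * n) * D2 ≤ t * D2 := mul_le_mul_of_nonneg_right h2 hD2
  nlinarith [mul_nonneg hn hD2, mul_nonneg (mul_nonneg hα0.le hn) hD2]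

theorem densest_ball_center_cost {V : Type*} [MetricSpace V] [Fintype V] [DecidableEq V]
    (P Pstar : Finset V) (α : ℝ) (hα : 0 < α) (hα8 : α < 1 / 8)
    (hoverlap : (1 - α) * (max P.card Pstar.card : ℝ) ≤ ((P ∩ Pstar).card : ℝ))
    (center : Finset V → V)
    (hcenter : ∀ (S : Finset V) (p : V),
      ∑ x ∈ S, dist x (center S) ^ 2 ≤ ∑ x ∈ S, dist x p ^ 2)
    (B : Finset V) (hBP : B ⊆ P) (hBcard : B.card = ⌈(1 - α) * (P.card : ℝ)⌉₊)
    (hBmin : ∀ S ⊆ P, S.card = ⌈(1 - α) * (P.card : ℝ)⌉₊ →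
      ∑ x ∈ B, dist x (center B) ^ 2 ≤ ∑ x ∈ S, dist x (center S) ^ 2) :
    ∑ x ∈ Pstar, dist x (center B) ^ 2 ≤
      (1 + 45 * Real.sqrt α) * ∑ x ∈ Pstar, dist x (center Pstar) ^ 2 := by
  classical
  have hα1 : α < 1 := by linarith
  set s := Real.sqrt α with hs_def
  have hs0 : 0 < s := Real.sqrt_pos.mpr hα
  have hs2 : s ^ 2 = α := Real.sq_sqrt hα.le
  have hs1 : s ≤ 1 := Real.sqrt_le_one.mpr (by linarith)
  clear_value s
  set Cb := center B with hCb
  set Cs := center Pstar with hCsdef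
  set T := B ∩ Pstar with hT
  set D := dist Cb Cs with hDdef
  have hTB : T ⊆ B := Finset.inter_subset_left
  have hTP : T ⊆ Pstar := Finset.inter_subset_right
  have hIP : P ∩ Pstar ⊆ P := Finset.inter_subset_left
  have hIPs : P ∩ Pstar ⊆ Pstar := Finset.inter_subset_right
  have h1α : (0:ℝ) ≤ 1 - α := by linarith
  have hc1 : (1 - α) * (P.card : ℝ) ≤ ((P ∩ Pstar).card : ℝ) :=
    le_trans (mul_le_mul_of_nonneg_left
      (le_max_left (P.card : ℝ) (Pstar.card : ℝ)) h1α) hoverlap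
  have hc2 : (1 - α) * (Pstar.card : ℝ) ≤ ((P ∩ Pstar).card : ℝ) :=
    le_trans (mul_le_mul_of_nonneg_left
      (le_max_right (P.card : ℝ) (Pstar.card : ℝ)) h1α) hoverlap
  have hnIn : ((P ∩ Pstar).card : ℝ) ≤ (Pstar.card : ℝ) := by
    exact_mod_cast Finset.card_le_card hIPs
  have hn0 : (0:ℝ) ≤ (Pstar.card : ℝ) := Nat.cast_nonneg _
  -- m ≤ |I| and the comparison set S
  have hmI : ⌈(1 - α) * (P.card : ℝ)⌉₊ ≤ (P ∩ Pstar).card := Nat.ceil_le.mpr hc1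
  obtain ⟨S, hSsub, hScard⟩ := Finset.exists_subset_card_eq hmI
  have hmB : (1 - α) * (P.card : ℝ) ≤ (B.card : ℝ) := by
    rw [hBcard]; exact Nat.le_ceil _
  -- card bound: |B| + |I| ≤ |T| + |P|
  have hc4 : (B.card : ℝ) + ((P ∩ Pstar).card : ℝ) ≤ (T.card : ℝ) + (P.card : ℝ) := by
    have hTI : B ∩ (P ∩ Pstar) = T := by
      rw [hT, ← Finset.inter_assoc, Finset.inter_eq_left.mpr hBP]
    have h1 : (B ∩ (P ∩ Pstar)).card + (B ∪ (P ∩ Pstar)).card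
        = B.card + (P ∩ Pstar).card := Finset.card_inter_add_card_union _ _
    have h2 : (B ∪ (P ∩ Pstar)).card ≤ P.card :=
      Finset.card_le_card (Finset.union_subset hBP hIP)
    have h3 : B.card + (P ∩ Pstar).card ≤ T.card + P.card := by
      rw [← h1, hTI]; omega
    exact_mod_cast h3
  -- |T| + |B \ Pstar| = |B|
  have hc5 : (T.card : ℝ) + ((B \ Pstar).card : ℝ) = (B.card : ℝ) := by
    have hBd : B \ T = B \ Pstar := by rw [hT]; exact Finset.sdiff_inter_self_left B Pstar
    have h1 : (B \ T).card + T.card = B.card := Finset.card_sdiff_add_card_eq_card hTB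
    rw [hBd] at h1
    have h2 : T.card + (B \ Pstar).card = B.card := by omega
    exact_mod_cast h2
  -- |Pstar \ T| + |T| = |Pstar|
  have hc6 : ((Pstar \ T).card : ℝ) + (T.card : ℝ) = (Pstar.card : ℝ) := by
    exact_mod_cast Finset.card_sdiff_add_card_eq_card hTP
  -- key cardinal estimates
  have hTlow : (1 - 2*α) * (Pstar.card : ℝ) ≤ (T.card : ℝ) :=
    aux_T α _ _ _ _ _ hc4 hmB hc1 hc2 hα hα8
  have hklow : (1 - α) * ((B \ Pstar).card : ℝ) ≤ α * (Pstar.card : ℝ) := by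
    refine aux_k α _ _ _ _ (by linarith only [hc4, hc5]) hc1 hnIn hα hα1
  have hMoup : ((Pstar \ T).card : ℝ) ≤ 2 * α * (Pstar.card : ℝ) := by
    linarith only [hc6, hTlow]
  -- split identities (before folding)
  have hBd : B \ T = B \ Pstar := by rw [hT]; exact Finset.sdiff_inter_self_left B Pstar
  have hsplitO : (∑ x ∈ Pstar \ T, dist x Cs ^ 2) + (∑ x ∈ T, dist x Cs ^ 2)
      = ∑ x ∈ Pstar, dist x Cs ^ 2 := Finset.sum_sdiff hTP
  have hsplitB : (∑ x ∈ B \ Pstar, dist x Cb ^ 2) + (∑ x ∈ T, dist x Cb ^ 2)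
      = ∑ x ∈ B, dist x Cb ^ 2 := by rw [← hBd]; exact Finset.sum_sdiff hTB
  have hsplitBC : (∑ x ∈ B \ Pstar, dist x Cs ^ 2) + (∑ x ∈ T, dist x Cs ^ 2)
      = ∑ x ∈ B, dist x Cs ^ 2 := by rw [← hBd]; exact Finset.sum_sdiff hTB
  have hsplitGoal : (∑ x ∈ Pstar \ T, dist x Cb ^ 2) + (∑ x ∈ T, dist x Cb ^ 2)
      = ∑ x ∈ Pstar, dist x Cb ^ 2 := Finset.sum_sdiff hTP
  -- costs
  set OPT := ∑ x ∈ Pstar, dist x Cs ^ 2 with hOPT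
  set cT := ∑ x ∈ T, dist x Cs ^ 2 with hcT
  set cOut := ∑ x ∈ Pstar \ T, dist x Cs ^ 2 with hcOut
  set LT := ∑ x ∈ T, dist x Cb ^ 2 with hLT
  set LF := ∑ x ∈ B \ Pstar, dist x Cb ^ 2 with hLF
  set Rout := ∑ x ∈ Pstar \ T, dist x Cb ^ 2 with hRout
  clear_value OPT cT cOut LT LF Rout
  have hOPT0 : 0 ≤ OPT := by
    rw [hOPT]; exact Finset.sum_nonneg fun x _ => sq_nonneg _
  have hcT0 : 0 ≤ cT := by
    rw [hcT]; exact Finset.sum_nonneg fun x _ => sq_nonneg _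
  have hcOut0 : 0 ≤ cOut := by
    rw [hcOut]; exact Finset.sum_nonneg fun x _ => sq_nonneg _
  have hLF0 : 0 ≤ LF := by
    rw [hLF]; exact Finset.sum_nonneg fun x _ => sq_nonneg _
  have hLT0 : 0 ≤ LT := by
    rw [hLT]; exact Finset.sum_nonneg fun x _ => sq_nonneg _
  -- cost(B, Cb) ≤ OPT
  have hBopt : LF + LT ≤ OPT := by
    have s1 := hBmin S (hSsub.trans hIP) hScard
    have s2 := hcenter S Cs
    have s3 : ∑ x ∈ S, dist x Cs ^ 2 ≤ ∑ x ∈ Pstar, dist x Cs ^ 2 :=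
      Finset.sum_le_sum_of_subset_of_nonneg (hSsub.trans hIPs) (fun x _ _ => sq_nonneg _)
    rw [hsplitB, hOPT]
    linarith only [s1, s2, s3]
  have hcTopt : cT ≤ OPT := by linarith only [hsplitO, hcOut0]
  have hLTopt : LT ≤ OPT := by linarith only [hBopt, hLF0]
  have hLFopt : LF ≤ OPT := by linarith only [hBopt, hLT0]
  -- D bound
  have hTD : (T.card : ℝ) * D ^ 2 ≤ 2 * LT + 2 * cT := by
    have hpt : ∀ x ∈ T, D ^ 2 ≤ 2 * dist x Cb ^ 2 + 2 * dist x Cs ^ 2 := by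
      intro x hx
      refine aux_sq _ _ _ dist_nonneg ?_
      rw [hDdef, dist_comm x Cb]; exact dist_triangle Cb x Cs
    calc (T.card : ℝ) * D ^ 2 = ∑ _x ∈ T, D ^ 2 := by
          rw [Finset.sum_const, nsmul_eq_mul]
      _ ≤ ∑ x ∈ T, (2 * dist x Cb ^ 2 + 2 * dist x Cs ^ 2) := Finset.sum_le_sum hpt
      _ = 2 * LT + 2 * cT := by
          rw [hLT, hcT, Finset.sum_add_distrib, ← Finset.mul_sum, ← Finset.mul_sum]
  have hD4 : (T.card : ℝ) * D ^ 2 ≤ 4 * OPT := by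
    linarith only [hTD, hLTopt, hcTopt]
  have hD0 : (0:ℝ) ≤ D ^ 2 := sq_nonneg _
  -- H1
  have hFsum : s * (∑ x ∈ B \ Pstar, dist x Cs ^ 2)
      ≤ (s + s^2) * LF + (1 + s) * (((B \ Pstar).card : ℝ) * D ^ 2) := by
    have hFpt : ∀ x ∈ B \ Pstar,
        s * dist x Cs ^ 2 ≤ (s + s^2) * dist x Cb ^ 2 + (1 + s) * D ^ 2 := by
      intro x hx
      refine aux_pt s _ _ _ hs0 dist_nonneg ?_
      rw [hDdef]; exact dist_triangle x Cb Cs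
    calc s * (∑ x ∈ B \ Pstar, dist x Cs ^ 2) = ∑ x ∈ B \ Pstar, s * dist x Cs ^ 2 :=
          Finset.mul_sum _ _ _
      _ ≤ ∑ x ∈ B \ Pstar, ((s + s^2) * dist x Cb ^ 2 + (1 + s) * D ^ 2) :=
          Finset.sum_le_sum hFpt
      _ = (s + s^2) * LF + (1 + s) * (((B \ Pstar).card : ℝ) * D ^ 2) := by
          rw [hLF, Finset.sum_add_distrib, ← Finset.mul_sum, Finset.sum_const, nsmul_eq_mul]
          ring
  have hH1 : s * LT ≤ s * cT + s^2 * LF + (1 + s) * (((B \ Pstar).card : ℝ) * D ^ 2) := by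
    have hcen : LF + LT ≤ (∑ x ∈ B \ Pstar, dist x Cs ^ 2) + cT := by
      rw [hsplitB, hsplitBC]
      exact hcenter B Cs
    have hcen' : s * (LF + LT) ≤ s * ((∑ x ∈ B \ Pstar, dist x Cs ^ 2) + cT) :=
      mul_le_mul_of_nonneg_left hcen hs0.le
    linarith only [hFsum, hcen']
  -- H2
  have hH2 : s * Rout ≤ (s + s^2) * cOut + (1 + s) * (((Pstar \ T).card : ℝ) * D ^ 2) := by
    have hOpt' : ∀ x ∈ Pstar \ T,
        s * dist x Cb ^ 2 ≤ (s + s^2) * dist x Cs ^ 2 + (1 + s) * D ^ 2 := by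
      intro x hx
      refine aux_pt s _ _ _ hs0 dist_nonneg ?_
      rw [hDdef, dist_comm Cb Cs]; exact dist_triangle x Cs Cb
    calc s * Rout = ∑ x ∈ Pstar \ T, s * dist x Cb ^ 2 := by rw [hRout, Finset.mul_sum]
      _ ≤ ∑ x ∈ Pstar \ T, ((s + s^2) * dist x Cs ^ 2 + (1 + s) * D ^ 2) :=
          Finset.sum_le_sum hOpt'
      _ = (s + s^2) * cOut + (1 + s) * (((Pstar \ T).card : ℝ) * D ^ 2) := by
          rw [hcOut, Finset.sum_add_distrib, ← Finset.mul_sum, Finset.sum_const, nsmul_eq_mul]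
          ring
  -- quantitative D² facts
  have hnD : (Pstar.card : ℝ) * D ^ 2 ≤ (16/3) * OPT :=
    aux_nD α _ _ _ _ hD4 hTlow hD0 hn0 hα hα8
  have hnkD : ((B \ Pstar).card : ℝ) * D ^ 2 ≤ (8/7) * α * ((Pstar.card : ℝ) * D ^ 2) := by
    have hk' : ((B \ Pstar).card : ℝ) ≤ (8/7) * α * (Pstar.card : ℝ) := by
      have hk0 : (0:ℝ) ≤ ((B \ Pstar).card : ℝ) := Nat.cast_nonneg _
      have := mul_le_mul_of_nonneg_right hα8.le hk0
      linarith only [hklow, this]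
    linarith only [mul_le_mul_of_nonneg_right hk' hD0]
  have hMoD : ((Pstar \ T).card : ℝ) * D ^ 2 ≤ 2 * α * ((Pstar.card : ℝ) * D ^ 2) := by
    linarith only [mul_le_mul_of_nonneg_right hMoup hD0]
  have hαnD : α * ((Pstar.card : ℝ) * D ^ 2) ≤ (16/3) * (α * OPT) := by
    linarith only [mul_le_mul_of_nonneg_left hnD hα.le]
  -- final assembly
  have hX0 : (0:ℝ) ≤ ((B \ Pstar).card : ℝ) * D ^ 2 + ((Pstar \ T).card : ℝ) * D ^ 2 := by
    positivity
  have h6 : ((B \ Pstar).card : ℝ) * D ^ 2 + ((Pstar \ T).card : ℝ) * D ^ 2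
      ≤ (352/21) * (α * OPT) := by linarith only [hnkD, hMoD, hαnD]
  have h7 : (1 + s) * (((B \ Pstar).card : ℝ) * D ^ 2)
        + (1 + s) * (((Pstar \ T).card : ℝ) * D ^ 2) ≤ (704/21) * (α * OPT) := by
    linarith only [mul_nonneg (by linarith only [hs1] : (0:ℝ) ≤ 1 - s) hX0, h6, hX0]
  have h8 : s^2 * LF + s^2 * cOut ≤ 2 * (α * OPT) := by
    rw [hs2]
    have e1 : α * LF ≤ α * OPT := mul_le_mul_of_nonneg_left hLFopt hα.le
    have e2 : α * cOut ≤ α * OPT := mul_le_mul_of_nonneg_left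
      (by linarith only [hsplitO, hcT0]) hα.le
    linarith only [e1, e2]
  have h10 : s * cOut + s * cT = s * OPT := by rw [← hsplitO]; ring
  have h11 : s^2 * OPT = α * OPT := by rw [hs2]
  have hαOPT0 : (0:ℝ) ≤ α * OPT := mul_nonneg hα.le hOPT0
  have hfinal : s * Rout + s * LT ≤ s * ((1 + 45 * s) * OPT) := by
    linarith only [hH1, hH2, h7, h8, h10, h11, hαOPT0]
  have hmul : s * (Rout + LT) ≤ s * ((1 + 45 * s) * OPT) := by
    linarith only [hfinal]
  have hmain := le_of_mul_le_mul_left hmul hs0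
  rw [← hsplitGoal]
  linarith only [hmain]
end

section
/- Let G be a 4-regular graph on n vertices whose minimum vertex cover has size at most α_min·n, and let G' be obtained from G by replacing each edge of E₁ = E(G) \ E₂ (where E₂ is a cut of size n) by a path of length 3 (adding two new vertices per such edge). Then G' has a vertex cover of size at most (α_min + 1)·n. -/
/-- A set `S` of vertices covers every edge of `G`. -/
def IsVertexCover {V : Type*} (G : SimpleGraph V) (S : Set V) : Prop :=
  ∀ ⦃u v : V⦄, G.Adj u v → u ∈ S ∨ v ∈ S

/-- The graph `G'` obtained from `G` by replacing each (oriented) edge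
`(u, v) ∈ E₁` with the length-3 path `u — v'_{e,u} — v'_{e,v} — v`,
where `v'_{e,u} = inr ((u,v), false)` and `v'_{e,v} = inr ((u,v), true)`. -/
def subdividedGraph {V : Type*} [DecidableEq V] (G : SimpleGraph V)
    (E₁ : Finset (V × V)) : SimpleGraph (V ⊕ (V × V) × Bool) :=
  SimpleGraph.fromRel (fun x y =>
    match x, y with
    | .inl u, .inl v => G.Adj u v ∧ ∀ p ∈ E₁, ¬(p = (u, v) ∨ p = (v, u))
    | .inl u, .inr (p, b) => p ∈ E₁ ∧ ((b = false ∧ u = p.1) ∨ (b = true ∧ u = p.2))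
    | .inr (p, b), .inr (p', b') => p ∈ E₁ ∧ p = p' ∧ b ≠ b'
    | _, _ => False)

/-- Completeness: if a 4-regular graph `G` on `n` vertices has a vertex cover of size
at most `αmin · n`, then the graph `G'` obtained by subdividing the `n` edges of
`E₁ = E(G) \ E₂` into length-3 paths has a vertex cover of size at most `(αmin + 1) · n`. -/
theorem subdivided_vertex_cover_completeness {V : Type*} [Fintype V] [DecidableEq V]
    (G : SimpleGraph V) [DecidableRel G.Adj]
    (hreg : ∀ v : V, G.degree v = 4)
    (E₁ : Finset (V × V))
    (hE₁adj : ∀ p ∈ E₁, G.Adj p.1 p.2)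
    (hE₁inj : Set.InjOn (fun p : V × V => s(p.1, p.2)) ↑E₁)
    (hE₁card : E₁.card = Fintype.card V)
    (αmin : ℝ)
    (hvc : ∃ S : Set V, IsVertexCover G S ∧ (S.ncard : ℝ) ≤ αmin * (Fintype.card V : ℝ)) :
    ∃ T : Set (V ⊕ (V × V) × Bool), IsVertexCover (subdividedGraph G E₁) T ∧
      (T.ncard : ℝ) ≤ (αmin + 1) * (Fintype.card V : ℝ) := by
  classical
  obtain ⟨S, hS, hScard⟩ := hvc
  set f : V × V → V ⊕ (V × V) × Bool :=
    fun p => Sum.inr (p, if p.1 ∈ S then true else false) with hf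
  refine ⟨Sum.inl '' S ∪ f '' (E₁ : Set (V × V)), ?_, ?_⟩
  · -- vertex cover
    have key : ∀ x y : V ⊕ (V × V) × Bool,
        (match x, y with
          | .inl u, .inl v => G.Adj u v ∧ ∀ p ∈ E₁, ¬(p = (u, v) ∨ p = (v, u))
          | .inl u, .inr (p, b) => p ∈ E₁ ∧ ((b = false ∧ u = p.1) ∨ (b = true ∧ u = p.2))
          | .inr (p, b), .inr (p', b') => p ∈ E₁ ∧ p = p' ∧ b ≠ b'
          | _, _ => False) →
        x ∈ Sum.inl '' S ∪ f '' (E₁ : Set (V × V)) ∨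
        y ∈ Sum.inl '' S ∪ f '' (E₁ : Set (V × V)) := by
      rintro (u | ⟨p, b⟩) (v | ⟨q, c⟩) h
      · -- inl, inl
        rcases hS h.1 with hu | hv
        · exact Or.inl (Or.inl ⟨u, hu, rfl⟩)
        · exact Or.inr (Or.inl ⟨v, hv, rfl⟩)
      · -- inl u, inr (q, c)
        obtain ⟨hq, hc⟩ := h
        rcases hc with ⟨rfl, rfl⟩ | ⟨rfl, rfl⟩
        · by_cases hu : q.1 ∈ S
          · exact Or.inl (Or.inl ⟨q.1, hu, rfl⟩)
          · refine Or.inr (Or.inr ⟨q, hq, ?_⟩)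
            simp [hf, hu]
        · by_cases hu : q.1 ∈ S
          · refine Or.inr (Or.inr ⟨q, hq, ?_⟩)
            simp [hf, hu]
          · rcases hS (hE₁adj q hq) with h1 | h2
            · exact absurd h1 hu
            · exact Or.inl (Or.inl ⟨q.2, h2, rfl⟩)
      · exact absurd h not_false
      · -- inr, inr
        obtain ⟨hp, rfl, hbc⟩ := h
        by_cases hq : (if p.1 ∈ S then true else false) = b
        · exact Or.inl (Or.inr ⟨p, hp, congrArg Sum.inr (Prod.ext rfl hq)⟩)
        · refine Or.inr (Or.inr ⟨p, hp, ?_⟩)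
          have : (if p.1 ∈ S then true else false) = c := by
            rcases Bool.eq_false_or_eq_true (if p.1 ∈ S then true else false) with h | h <;>
            rcases Bool.eq_false_or_eq_true b with hb | hb <;>
            rcases Bool.eq_false_or_eq_true c with hc | hc <;>
              simp_all
          exact congrArg Sum.inr (Prod.ext rfl this)
    intro x y hxy
    rw [subdividedGraph, SimpleGraph.fromRel_adj] at hxy
    rcases hxy.2 with h | h
    · exact key x y h
    · exact (key y x h).symm
  · -- cardinality
    have hSfin : S.Finite := Set.toFinite S
    have h1 : (Sum.inl '' S : Set (V ⊕ (V × V) × Bool)).ncard = S.ncard :=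
      Set.ncard_image_of_injective _ Sum.inl_injective
    have h2 : (f '' (E₁ : Set (V × V))).ncard ≤ E₁.card := by
      calc (f '' (E₁ : Set (V × V))).ncard ≤ (E₁ : Set (V × V)).ncard :=
            Set.ncard_image_le (Set.toFinite _)
        _ = E₁.card := Set.ncard_coe_finset E₁
    have h3 := Set.ncard_union_le (Sum.inl '' S) (f '' (E₁ : Set (V × V)))
    have h4 : ((Sum.inl '' S ∪ f '' (E₁ : Set (V × V))).ncard : ℝ)
        ≤ (S.ncard : ℝ) + (E₁.card : ℝ) := by
      rw [h1, ← Nat.cast_add] at *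
      exact_mod_cast le_trans h3 (by omega)
    calc ((Sum.inl '' S ∪ f '' (E₁ : Set (V × V))).ncard : ℝ)
        ≤ (S.ncard : ℝ) + (E₁.card : ℝ) := h4
      _ ≤ αmin * (Fintype.card V : ℝ) + (Fintype.card V : ℝ) := by
          rw [hE₁card]; linarith
      _ = (αmin + 1) * (Fintype.card V : ℝ) := by ring
end

section
/- Let G be a 4-regular graph on n vertices such that every vertex cover of G has size at least α_max·n, and let G' be the graph obtained by subdividing each edge of E₁ = E(G) \ E₂ (|E₂| = n, a cut) into a path of length 3. Then every vertex cover of G' has size at least (α_max + 1)·n. -/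
/-! A vertex cover `T` of the subdivided graph contracts to a vertex cover of `G`: keep the
original vertices of `T`, and for every subdivided edge whose two inner vertices both lie in `T`
add one endpoint of that edge. Each subdivided edge costs `T` at least one inner vertex (its middle
edge must be covered), and a second one whenever it contributes an endpoint, so the contracted
cover is smaller than `T` by at least `|E₁|`. -/

section Subdivided

variable {V : Type*} [DecidableEq V] {G : SimpleGraph V} {E₁ : Finset (V × V)}
  {T : Set (V ⊕ (V × V) × Bool)}

theorem subdividedGraph_adj_inr_inr {p : V × V} (hp : p ∈ E₁) :
    (subdividedGraph G E₁).Adj (.inr (p, false)) (.inr (p, true)) :=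
  ⟨by simp, Or.inl ⟨hp, rfl, by simp⟩⟩

theorem subdividedGraph_adj_inl_fst {p : V × V} (hp : p ∈ E₁) :
    (subdividedGraph G E₁).Adj (.inl p.1) (.inr (p, false)) :=
  ⟨by simp, Or.inl ⟨hp, Or.inl ⟨rfl, rfl⟩⟩⟩

theorem subdividedGraph_adj_inl_snd {p : V × V} (hp : p ∈ E₁) :
    (subdividedGraph G E₁).Adj (.inl p.2) (.inr (p, true)) :=
  ⟨by simp, Or.inl ⟨hp, Or.inr ⟨rfl, rfl⟩⟩⟩

theorem subdividedGraph_adj_inl_inl {u v : V} (huv : G.Adj u v)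
    (hE₁ : ∀ p ∈ E₁, ¬(p = (u, v) ∨ p = (v, u))) :
    (subdividedGraph G E₁).Adj (.inl u) (.inl v) :=
  ⟨by simpa using huv.ne, Or.inl ⟨huv, hE₁⟩⟩

variable (E₁ T)

def doublyCoveredEdges : Set (V × V) :=
  {p | p ∈ E₁ ∧ .inr (p, false) ∈ T ∧ .inr (p, true) ∈ T}

def contractedCover : Set V :=
  {u | .inl u ∈ T} ∪ Prod.fst '' doublyCoveredEdges E₁ T

variable {E₁ T}

theorem fst_mem_or_snd_mem_contractedCover (hT : IsVertexCover (subdividedGraph G E₁) T)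
    {p : V × V} (hp : p ∈ E₁) : p.1 ∈ contractedCover E₁ T ∨ p.2 ∈ contractedCover E₁ T := by
  by_cases hfalse : .inr (p, false) ∈ T
  · by_cases htrue : .inr (p, true) ∈ T
    · exact .inl (.inr ⟨p, ⟨hp, hfalse, htrue⟩, rfl⟩)
    · exact .inr (.inl ((hT (subdividedGraph_adj_inl_snd hp)).resolve_right htrue))
  · exact .inl (.inl ((hT (subdividedGraph_adj_inl_fst hp)).resolve_right hfalse))

theorem isVertexCover_contractedCover (hT : IsVertexCover (subdividedGraph G E₁) T) :
    IsVertexCover G (contractedCover E₁ T) := by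
  intro u v huv
  by_cases hE₁ : ∃ p ∈ E₁, p = (u, v) ∨ p = (v, u)
  · obtain ⟨p, hp, rfl | rfl⟩ := hE₁
    · exact fst_mem_or_snd_mem_contractedCover hT hp
    · exact (fst_mem_or_snd_mem_contractedCover hT hp).symm
  · exact (hT (subdividedGraph_adj_inl_inl huv fun p hp h => hE₁ ⟨p, hp, h⟩)).imp .inl .inl

theorem ncard_contractedCover_add_card_le [Fintype V]
    (hT : IsVertexCover (subdividedGraph G E₁) T) :
    (contractedCover E₁ T).ncard + E₁.card ≤ T.ncard := by
  classical
  set L : Finset V := {u | .inl u ∈ T}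
  set F : Bool → Finset (V × V) := fun b => {p ∈ E₁ | .inr (p, b) ∈ T}
  have hunion : F false ∪ F true = E₁ := by
    ext p
    simp only [F, Finset.mem_union, Finset.mem_filter]
    exact ⟨fun h => h.elim (·.1) (·.1), fun hp => (hT (subdividedGraph_adj_inr_inr hp)).imp
      (⟨hp, ·⟩) (⟨hp, ·⟩)⟩
  have hcontracted : (contractedCover E₁ T).ncard ≤ L.card + (F false ∩ F true).card := by
    have hsub : contractedCover E₁ T ⊆ ↑(L ∪ (F false ∩ F true).image Prod.fst) := by
      rintro u (hu | ⟨p, ⟨hp, hfalse, htrue⟩, rfl⟩)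
      · simp [L, hu]
      · simp only [Finset.coe_union, Finset.coe_image, Finset.coe_inter]
        exact .inr ⟨p, by simp [F, hp, hfalse, htrue], rfl⟩
    calc (contractedCover E₁ T).ncard ≤ (L ∪ (F false ∩ F true).image Prod.fst).card :=
          (Set.ncard_le_ncard hsub).trans_eq (Set.ncard_coe_finset _)
      _ ≤ L.card + ((F false ∩ F true).image Prod.fst).card := Finset.card_union_le _ _
      _ ≤ L.card + (F false ∩ F true).card := by gcongr; exact Finset.card_image_le
  have hinner : Disjoint (F false ×ˢ {false}) (F true ×ˢ {true}) := by
    simp [Finset.disjoint_left]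
  have hT_sup : ↑(L.disjSum (F false ×ˢ {false} ∪ F true ×ˢ {true})) ⊆ T := by
    rintro (u | ⟨p, b⟩) h
    · simpa [L] using h
    · cases b <;> simp_all [F]
  calc (contractedCover E₁ T).ncard + E₁.card
      ≤ L.card + (F false ∩ F true).card + (F false ∪ F true).card := by
        rw [hunion]
        gcongr
    _ = (L.disjSum (F false ×ˢ {false} ∪ F true ×ˢ {true})).card := by
        rw [Finset.card_disjSum, Finset.card_union_of_disjoint hinner, Finset.card_product,
          Finset.card_product, Finset.card_singleton, Finset.card_singleton, mul_one, mul_one,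
          ← Finset.card_union_add_card_inter (F false) (F true)]
        ring
    _ ≤ T.ncard := (Set.ncard_coe_finset _).symm.trans_le (Set.ncard_le_ncard hT_sup)

end Subdivided

theorem subdivided_vertex_cover_soundness_general {V : Type*} [Fintype V] [DecidableEq V]
    (G : SimpleGraph V)
    (E₁ : Finset (V × V))
    (hE₁card : E₁.card = Fintype.card V)
    (αmax : ℝ)
    (hvc : ∀ S : Set V, IsVertexCover G S → αmax * (Fintype.card V : ℝ) ≤ (S.ncard : ℝ)) :
    ∀ T : Set (V ⊕ (V × V) × Bool), IsVertexCover (subdividedGraph G E₁) T →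
      (αmax + 1) * (Fintype.card V : ℝ) ≤ (T.ncard : ℝ) := by
  intro T hT
  have hcontracted := hvc _ (isVertexCover_contractedCover hT)
  have hcount : ((contractedCover E₁ T).ncard : ℝ) + Fintype.card V ≤ T.ncard := by
    exact_mod_cast hE₁card ▸ ncard_contractedCover_add_card_le hT
  linarith

/-- Soundness: if every vertex cover of the 4-regular graph `G` on `n` vertices has
size at least `αmax · n`, then every vertex cover of the graph obtained by subdividing
the `n` edges of `E₁ = E(G) \ E₂` into length-3 paths has size at least `(αmax + 1) · n`. -/
theorem subdivided_vertex_cover_soundness {V : Type*} [Fintype V] [DecidableEq V]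
    (G : SimpleGraph V) [DecidableRel G.Adj]
    (hreg : ∀ v : V, G.degree v = 4)
    (E₁ : Finset (V × V))
    (hE₁adj : ∀ p ∈ E₁, G.Adj p.1 p.2)
    (hE₁inj : Set.InjOn (fun p : V × V => s(p.1, p.2)) ↑E₁)
    (hE₁card : E₁.card = Fintype.card V)
    (αmax : ℝ)
    (hvc : ∀ S : Set V, IsVertexCover G S → αmax * (Fintype.card V : ℝ) ≤ (S.ncard : ℝ)) :
    ∀ T : Set (V ⊕ (V × V) × Bool), IsVertexCover (subdividedGraph G E₁) T →
      (αmax + 1) * (Fintype.card V : ℝ) ≤ (T.ncard : ℝ) :=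
  subdivided_vertex_cover_soundness_general G E₁ hE₁card αmax hvc
end
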